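/- The deformed Bessel functions satisfy the recurrence 2 D_μ J_n^μ(x) = J_{n−1}^μ(x) − J_{n+1}^μ(x), where D_μ is the Dunkl operator. -/

import Mathlib

/-- The Dunkl operator `D_μ f(x) = f'(x) + μ (f(x) - f(-x))/x`. -/
noncomputable def dunkl (μ : ℝ) (f : ℝ → ℝ) (x : ℝ) : ℝ :=
  deriv f x + μ * (f x - f (-x)) / x

/-- The deformed integer `[n]_μ = n + μ (1 - (-1)^n)`. -/
noncomputable def dIdx (μ : ℝ) (n : ℕ) : ℝ := n + μ * (1 - (-1 : ℝ) ^ n)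

/-- The deformed factorial `[n]_μ!`. -/
noncomputable def dFact (μ : ℝ) : ℕ → ℝ
  | 0 => 1
  | n + 1 => dIdx μ (n + 1) * dFact μ n

/-- The deformed Bessel function `J_n^μ` for `n ≥ 0`. -/
noncomputable def Jmu (μ : ℝ) (n : ℕ) (x : ℝ) : ℝ :=
  ∑' k : ℕ, (-1 : ℝ) ^ k * (Nat.factorial (2 * k + n)) /
      ((Nat.factorial k) * (Nat.factorial (k + n)) * dFact μ (2 * k + n)) *
    (x / 2) ^ (2 * k + n)

/-- `J_n^μ` for `n ∈ ℤ`, with `J_{-n}^μ = (-1)^n J_n^μ`. -/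
noncomputable def JmuZ (μ : ℝ) (n : ℤ) (x : ℝ) : ℝ :=
  if 0 ≤ n then Jmu μ n.toNat x else (-1 : ℝ) ^ (-n).toNat * Jmu μ (-n).toNat x

/-!
Both sides are power series in `x / 2` whose coefficients decay like `1 / k!` (for `μ ≥ 0` one has
`[m]_μ ≥ m`, hence `[m]_μ! ≥ m!`), so `D_μ` may be applied termwise. On a monomial,
`2 D_μ (x/2)^m = [m]_μ (x/2)^(m-1)`: the reflection part `μ ((x/2)^m - (-x/2)^m) / x` supplies
exactly the deformation `μ (1 - (-1)^m)` of `m`. The recurrence thereby reduces to the coefficient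
identity `c(n+1, k+1) [2k+n+3]_μ = c(n, k+1) - c(n+2, k)` for the coefficients `c = JmuCoeff`
of the series, a Pascal-type relation between
factorials once `[2k+n+3]_μ` has been absorbed into `[2k+n+3]_μ!`. For `n = 0` the left end
`J_{-1} = -J_1` produces the factor `-2`.
-/

open Nat

section DeformedFactorial

variable {μ : ℝ}

lemma dIdx_zero (μ : ℝ) : dIdx μ 0 = 0 := by simp [dIdx]

lemma natCast_le_dIdx (hμ : 0 ≤ μ) (m : ℕ) : (m : ℝ) ≤ dIdx μ m := by
  have : (-1 : ℝ) ^ m ≤ 1 := by rcases neg_one_pow_eq_or ℝ m with h | h <;> simp [h]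
  have := mul_nonneg hμ (sub_nonneg.mpr this)
  unfold dIdx
  linarith

lemma dIdx_pos (hμ : 0 ≤ μ) {m : ℕ} (hm : m ≠ 0) : 0 < dIdx μ m :=
  (Nat.cast_pos.mpr (Nat.pos_of_ne_zero hm)).trans_le (natCast_le_dIdx hμ m)

lemma dFact_succ (μ : ℝ) (m : ℕ) : dFact μ (m + 1) = dIdx μ (m + 1) * dFact μ m := rfl

lemma dFact_pos (hμ : 0 ≤ μ) (m : ℕ) : 0 < dFact μ m := by
  induction m with
  | zero => simp [dFact]
  | succ m ih => rw [dFact_succ]; exact mul_pos (dIdx_pos hμ m.succ_ne_zero) ih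

lemma factorial_le_dFact (hμ : 0 ≤ μ) (m : ℕ) : (m ! : ℝ) ≤ dFact μ m := by
  induction m with
  | zero => simp [dFact]
  | succ m ih =>
    rw [dFact_succ, factorial_succ, cast_mul]
    exact mul_le_mul (natCast_le_dIdx hμ _) ih (by positivity) (dIdx_pos hμ m.succ_ne_zero).le

end DeformedFactorial

section SeriesWithFactorialDecay

variable {a : ℕ → ℝ}

lemma summable_pow_two_mul_add_div_factorial (r : ℝ) (n : ℕ) :
    Summable fun k : ℕ => r ^ (2 * k + n) / (k ! : ℝ) := by
  refine ((Real.summable_pow_div_factorial (r ^ 2)).mul_left (r ^ n)).congr fun k => ?_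
  ring

lemma hasDerivAt_const_mul_half_pow (c : ℝ) (m : ℕ) (y : ℝ) :
    HasDerivAt (fun z : ℝ => c * (z / 2) ^ m) (c * (m * (y / 2) ^ (m - 1) / 2)) y := by
  have h : HasDerivAt (fun z : ℝ => (z / 2) ^ m) (m * (y / 2) ^ (m - 1) * (1 / 2)) y :=
    ((hasDerivAt_id y).div_const 2).pow m
  exact (h.const_mul c).congr_deriv (by ring)

lemma summable_mul_half_pow (ha : ∀ k, |a k| ≤ (k ! : ℝ)⁻¹) (n : ℕ) (x : ℝ) :
    Summable fun k : ℕ => a k * (x / 2) ^ (2 * k + n) := by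
  refine (summable_pow_two_mul_add_div_factorial |x / 2| n).of_norm_bounded fun k => ?_
  rw [norm_mul, norm_pow, Real.norm_eq_abs, Real.norm_eq_abs, div_eq_inv_mul _ (k ! : ℝ)]
  exact mul_le_mul_of_nonneg_right (ha k) (by positivity)

lemma norm_mul_deriv_half_pow_le (ha : ∀ k, |a k| ≤ (k ! : ℝ)⁻¹) (n k : ℕ) {y R : ℝ}
    (hy : |y / 2| ≤ R) (hR : 1 ≤ R) :
    ‖a k * ((2 * k + n : ℕ) * (y / 2) ^ (2 * k + n - 1) / 2)‖ ≤ (2 * R) ^ (2 * k + n) / k ! := by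
  set m := 2 * k + n
  have hm : (m : ℝ) ≤ 2 ^ m := by exact_mod_cast m.lt_two_pow_self.le
  have hpow : |y / 2| ^ (m - 1) ≤ R ^ m :=
    (pow_le_pow_left₀ (abs_nonneg _) hy _).trans (pow_le_pow_right₀ hR (m.sub_le 1))
  calc ‖a k * (m * (y / 2) ^ (m - 1) / 2)‖ = |a k| * (m * |y / 2| ^ (m - 1) / 2) := by
        simp [abs_div]
    _ ≤ (k ! : ℝ)⁻¹ * (2 ^ m * R ^ m) := by
        gcongr
        · exact ha k
        · calc (m : ℝ) * |y / 2| ^ (m - 1) / 2 ≤ m * |y / 2| ^ (m - 1) := by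
                linarith [mul_nonneg m.cast_nonneg (pow_nonneg (abs_nonneg (y / 2)) (m - 1))]
            _ ≤ 2 ^ m * R ^ m := by gcongr
    _ = (2 * R) ^ m / k ! := by rw [mul_pow]; ring

lemma summable_mul_deriv_half_pow (ha : ∀ k, |a k| ≤ (k ! : ℝ)⁻¹) (n : ℕ) (x : ℝ) :
    Summable fun k : ℕ => a k * ((2 * k + n : ℕ) * (x / 2) ^ (2 * k + n - 1) / 2) :=
  (summable_pow_two_mul_add_div_factorial (2 * (|x| + 1)) n).of_norm_bounded fun k =>
    norm_mul_deriv_half_pow_le ha n k (by rw [abs_div, abs_two]; linarith [abs_nonneg x])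
      (le_add_of_nonneg_left (abs_nonneg x))

lemma hasDerivAt_tsum_mul_half_pow (ha : ∀ k, |a k| ≤ (k ! : ℝ)⁻¹) (n : ℕ) (x : ℝ) :
    HasDerivAt (fun y => ∑' k : ℕ, a k * (y / 2) ^ (2 * k + n))
      (∑' k : ℕ, a k * ((2 * k + n : ℕ) * (x / 2) ^ (2 * k + n - 1) / 2)) x := by
  set R := |x| + 1
  have hx : x ∈ Metric.ball (0 : ℝ) R := by simp [R]
  refine hasDerivAt_tsum_of_isPreconnected
    (g' := fun k y => a k * ((2 * k + n : ℕ) * (y / 2) ^ (2 * k + n - 1) / 2))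
    (summable_pow_two_mul_add_div_factorial (2 * R) n) Metric.isOpen_ball
    (convex_ball 0 R).isPreconnected
    (fun k y _ => hasDerivAt_const_mul_half_pow (a k) _ y) (fun k y hy => ?_)
    hx (summable_mul_half_pow ha n x) hx
  rw [mem_ball_zero_iff, Real.norm_eq_abs] at hy
  refine norm_mul_deriv_half_pow_le ha n k ?_ (le_add_of_nonneg_left (abs_nonneg x))
  rw [abs_div, abs_two]
  linarith [abs_nonneg y]

end SeriesWithFactorialDecay

section Dunkl

lemma dunkl_tsum {μ x : ℝ} {g : ℕ → ℝ → ℝ} {g' : ℕ → ℝ}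
    (hf : HasDerivAt (fun y => ∑' k, g k y) (∑' k, g' k) x)
    (hg : ∀ k, HasDerivAt (g k) (g' k) x) (hg' : Summable g')
    (hx : Summable fun k => g k x) (hnx : Summable fun k => g k (-x)) :
    dunkl μ (fun y => ∑' k, g k y) x = ∑' k, dunkl μ (g k) x := by
  simp only [dunkl, hf.deriv, (hg _).deriv]
  rw [hg'.tsum_add (((hx.sub hnx).mul_left μ).div_const x), tsum_div_const, tsum_mul_left,
    hx.tsum_sub hnx]

lemma two_mul_dunkl_const_mul_half_pow (μ c : ℝ) (m : ℕ) {x : ℝ} (hx : x ≠ 0) :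
    2 * dunkl μ (fun y => c * (y / 2) ^ m) x = c * dIdx μ m * (x / 2) ^ (m - 1) := by
  rw [dunkl, (hasDerivAt_const_mul_half_pow c m x).deriv]
  cases m with
  | zero => simp [dIdx]
  | succ j =>
    simp only [dIdx, neg_div, neg_pow (x / 2), pow_succ, Nat.add_sub_cancel]
    field_simp

variable {a : ℕ → ℝ}

lemma two_mul_dunkl_tsum_mul_half_pow (μ : ℝ) (ha : ∀ k, |a k| ≤ (k ! : ℝ)⁻¹) (n : ℕ) {x : ℝ}
    (hx : x ≠ 0) :
    2 * dunkl μ (fun y => ∑' k : ℕ, a k * (y / 2) ^ (2 * k + n)) x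
      = ∑' k : ℕ, a k * dIdx μ (2 * k + n) * (x / 2) ^ (2 * k + n - 1) := by
  rw [dunkl_tsum (hasDerivAt_tsum_mul_half_pow ha n x)
    (fun k => hasDerivAt_const_mul_half_pow (a k) _ x) (summable_mul_deriv_half_pow ha n x)
    (summable_mul_half_pow ha n x) (summable_mul_half_pow ha n (-x)), ← tsum_mul_left]
  exact tsum_congr fun k => two_mul_dunkl_const_mul_half_pow μ (a k) _ hx

end Dunkl

section BesselCoefficients

-- `Jmu μ n x` unfolds to `∑' k, JmuCoeff μ n k * (x / 2) ^ (2 * k + n)`.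
noncomputable def JmuCoeff (μ : ℝ) (n k : ℕ) : ℝ :=
  (-1 : ℝ) ^ k * (2 * k + n)! / (k ! * (k + n)! * dFact μ (2 * k + n))

variable {μ : ℝ}

lemma abs_JmuCoeff_le (hμ : 0 ≤ μ) (n k : ℕ) : |JmuCoeff μ n k| ≤ (k ! : ℝ)⁻¹ := by
  have hD := dFact_pos hμ (2 * k + n)
  rw [JmuCoeff, abs_div, abs_mul, abs_pow, abs_neg, abs_one, one_pow, one_mul,
    abs_of_pos (by positivity), abs_of_pos (by positivity)]
  calc ((2 * k + n)! : ℝ) / (k ! * (k + n)! * dFact μ (2 * k + n))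
      ≤ (2 * k + n)! / (k ! * 1 * (2 * k + n)!) := by
        gcongr
        · exact_mod_cast (k + n).factorial_pos
        · exact factorial_le_dFact hμ _
    _ = (k ! : ℝ)⁻¹ := by field_simp

lemma JmuCoeff_succ_zero_mul_dIdx (hμ : 0 ≤ μ) (p : ℕ) :
    JmuCoeff μ (p + 1) 0 * dIdx μ (p + 1) = JmuCoeff μ p 0 := by
  have := (dIdx_pos hμ p.succ_ne_zero).ne'
  have := (dFact_pos hμ p).ne'
  simp only [JmuCoeff, mul_zero, zero_add, pow_zero, factorial_zero]
  rw [dFact_succ, factorial_succ]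
  push_cast
  field_simp

lemma JmuCoeff_succ_succ_mul_dIdx (hμ : 0 ≤ μ) (p j : ℕ) :
    JmuCoeff μ (p + 1) (j + 1) * dIdx μ (2 * j + p + 3)
      = JmuCoeff μ p (j + 1) - JmuCoeff μ (p + 2) j := by
  have : dIdx μ (2 * j + p + 2 + 1) ≠ 0 := (dIdx_pos hμ (by omega)).ne'
  have := (dFact_pos hμ (2 * j + p + 2)).ne'
  simp only [JmuCoeff, show 2 * j + p + 3 = 2 * j + p + 2 + 1 by omega,
    show 2 * (j + 1) + (p + 1) = 2 * j + p + 2 + 1 by omega,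
    show 2 * (j + 1) + p = 2 * j + p + 2 by omega, show 2 * j + (p + 2) = 2 * j + p + 2 by omega,
    show j + 1 + (p + 1) = j + p + 1 + 1 by omega, show j + 1 + p = j + p + 1 by omega,
    show j + (p + 2) = j + p + 1 + 1 by omega]
  rw [dFact_succ, factorial_succ (2 * j + p + 2), factorial_succ (j + p + 1), factorial_succ j]
  push_cast
  field_simp
  ring

lemma JmuCoeff_zero_succ_mul_dIdx (hμ : 0 ≤ μ) (j : ℕ) :
    JmuCoeff μ 0 (j + 1) * dIdx μ (2 * j + 2) = -2 * JmuCoeff μ 1 j := by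
  have := (dIdx_pos hμ (2 * j + 1).succ_ne_zero).ne'
  have := (dFact_pos hμ (2 * j + 1)).ne'
  simp only [JmuCoeff, show 2 * (j + 1) + 0 = 2 * j + 1 + 1 by omega, add_zero]
  rw [dFact_succ, factorial_succ (2 * j + 1), factorial_succ j]
  push_cast
  field_simp
  ring

end BesselCoefficients

section Recurrence

lemma JmuZ_natCast (μ : ℝ) (n : ℕ) (x : ℝ) : JmuZ μ n x = Jmu μ n x := by simp [JmuZ]

lemma JmuZ_neg_one (μ x : ℝ) : JmuZ μ (-1) x = -Jmu μ 1 x := by simp [JmuZ]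

variable {μ : ℝ}

lemma hasSum_Jmu (hμ : 0 ≤ μ) (n : ℕ) (x : ℝ) :
    HasSum (fun k : ℕ => JmuCoeff μ n k * (x / 2) ^ (2 * k + n)) (Jmu μ n x) :=
  (summable_mul_half_pow (abs_JmuCoeff_le hμ n) n x).hasSum

lemma two_mul_dunkl_Jmu (hμ : 0 ≤ μ) (n : ℕ) {x : ℝ} (hx : x ≠ 0) :
    2 * dunkl μ (Jmu μ n) x
      = ∑' k : ℕ, JmuCoeff μ n k * dIdx μ (2 * k + n) * (x / 2) ^ (2 * k + n - 1) :=
  two_mul_dunkl_tsum_mul_half_pow μ (abs_JmuCoeff_le hμ n) n hx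

lemma tsum_JmuCoeff_succ_mul_dIdx (hμ : 0 ≤ μ) (p : ℕ) (x : ℝ) :
    ∑' k : ℕ, JmuCoeff μ (p + 1) k * dIdx μ (2 * k + (p + 1)) * (x / 2) ^ (2 * k + (p + 1) - 1)
      = Jmu μ p x - Jmu μ (p + 2) x := by
  refine ((hasSum_nat_add_iff' 1).mp ?_).tsum_eq
  convert ((hasSum_nat_add_iff' 1).mpr (hasSum_Jmu hμ p x)).sub (hasSum_Jmu hμ (p + 2) x) using 1
  · funext j
    rw [show 2 * (j + 1) + (p + 1) - 1 = 2 * (j + 1) + p by omega,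
      show 2 * (j + 1) + (p + 1) = 2 * j + p + 3 by omega, JmuCoeff_succ_succ_mul_dIdx hμ,
      show 2 * j + (p + 2) = 2 * (j + 1) + p by omega, sub_mul]
  · simp only [Finset.sum_range_one, mul_zero, zero_add, add_succ_sub_one,
      JmuCoeff_succ_zero_mul_dIdx hμ]
    ring

lemma tsum_JmuCoeff_zero_mul_dIdx (hμ : 0 ≤ μ) (x : ℝ) :
    ∑' k : ℕ, JmuCoeff μ 0 k * dIdx μ (2 * k + 0) * (x / 2) ^ (2 * k + 0 - 1)
      = -2 * Jmu μ 1 x := by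
  refine ((hasSum_nat_add_iff' 1).mp ?_).tsum_eq
  simp only [Finset.sum_range_one, mul_zero, add_zero, dIdx_zero, zero_mul, sub_zero]
  refine ((hasSum_Jmu hμ 1 x).mul_left (-2)).congr_fun fun j => ?_
  rw [show 2 * (j + 1) - 1 = 2 * j + 1 by omega, show 2 * (j + 1) = 2 * j + 2 by omega,
    JmuCoeff_zero_succ_mul_dIdx hμ, mul_assoc]

end Recurrence

/-- The recurrence `2 D_μ J_n^μ(x) = J_{n-1}^μ(x) - J_{n+1}^μ(x)`. -/
theorem Jmu_recurrence (μ : ℝ) (hμ : 0 ≤ μ) (n : ℕ) (x : ℝ) (hx : x ≠ 0) :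
    2 * dunkl μ (Jmu μ n) x = JmuZ μ ((n : ℤ) - 1) x - Jmu μ (n + 1) x := by
  rw [two_mul_dunkl_Jmu hμ n hx]
  cases n with
  | zero =>
    rw [tsum_JmuCoeff_zero_mul_dIdx hμ, Nat.cast_zero, zero_sub, JmuZ_neg_one]
    ring
  | succ p =>
    rw [tsum_JmuCoeff_succ_mul_dIdx hμ, Nat.cast_succ, add_sub_cancel_right, JmuZ_natCast]
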